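/- Let G be a triangulated Laman graph with N ≥ 2 vertices and let positive target distances {d̄_ij : (i,j)∈E} satisfy the triangle inequalities associated with G. Then the set T = {p ∈ P_G : ‖x_i−x_j‖ = d̄_ij for all (i,j) ∈ E} is nonempty, every configuration in T is strongly rigid, and T is the disjoint union of exactly 2^{N−2} orbits of the SE(2) action. -/

import Mathlib

open scoped BigOperators
open scoped Classical

noncomputable section

abbrev Plane : Type := EuclideanSpace ℝ (Fin 2)

abbrev Config (ι : Type) : Type := PiLp 2 (fun _ : ι => Plane)

def ConfigSpace {N : ℕ} (G : SimpleGraph (Fin N)) : Set (Config (Fin N)) :=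
  {p | ∀ i j : Fin N, G.Adj i j → p i ≠ p j}

noncomputable def formationField {ι : Type} [Fintype ι] (Adj : ι → ι → Prop)
    (f : ι → ι → ℝ → ℝ) (q : Config ι) : Config ι :=
  WithLp.toLp 2 fun v => ∑ u, if Adj v u then f v u ‖q v - q u‖ • (q u - q v) else 0

noncomputable def potential {N : ℕ} (G : SimpleGraph (Fin N)) (f : Fin N → Fin N → ℝ → ℝ)
    (p : Config (Fin N)) : ℝ :=
  ∑ i, ∑ j, if G.Adj i j ∧ i < j then ∫ t in (1:ℝ)..(‖p i - p j‖), t * f i j t else 0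

def MemU (f : ℝ → ℝ) : Prop :=
  ContDiffOn ℝ 1 f (Set.Ioi 0) ∧
  (∀ x : ℝ, 0 < x → 0 < deriv (fun t => t * f t) x) ∧
  (∃! d : ℝ, 0 < d ∧ f d = 0) ∧
  Filter.Tendsto (fun x : ℝ => ∫ t in x..(1:ℝ), t * f t) (nhdsWithin 0 (Set.Ioi 0)) Filter.atBot

def SO2 (θ : Matrix (Fin 2) (Fin 2) ℝ) : Prop :=
  θ ∈ Matrix.orthogonalGroup (Fin 2) ℝ ∧ θ.det = 1

noncomputable def rotAct {ι : Type} (θ : Matrix (Fin 2) (Fin 2) ℝ) (v : Plane) (p : Config ι) :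
    Config ι :=
  WithLp.toLp 2 fun i => Matrix.toEuclideanLin θ (p i) + v

def orbitSE2 {ι : Type} (p : Config ι) : Set (Config ι) :=
  {q | ∃ θ : Matrix (Fin 2) (Fin 2) ℝ, SO2 θ ∧ ∃ v : Plane, q = rotAct θ v p}

noncomputable def basisVec {ι : Type} [DecidableEq ι] (i : ι) (a : Fin 2) : Config ι :=
  WithLp.toLp 2 (Pi.single i (EuclideanSpace.single a (1:ℝ)))

noncomputable def hessMat {ι : Type} [Fintype ι] [DecidableEq ι] (Φ : Config ι → ℝ)
    (p : Config ι) : Matrix (ι × Fin 2) (ι × Fin 2) ℝ :=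
  Matrix.of fun q r => fderiv ℝ (fun x => fderiv ℝ Φ x (basisVec q.1 q.2)) p (basisVec r.1 r.2)

noncomputable def jacMat {ι : Type} [Fintype ι] [DecidableEq ι] (F : Config ι → Config ι)
    (p : Config ι) : Matrix (ι × Fin 2) (ι × Fin 2) ℝ :=
  Matrix.of fun q r => fderiv ℝ (fun x => F x q.1 q.2) p (basisVec r.1 r.2)

noncomputable def posIndex {n : Type} [Fintype n] [DecidableEq n] (A : Matrix n n ℝ) : ℕ :=
  Multiset.card (A.charpoly.roots.filter fun x => 0 < x)

noncomputable def negIndex {n : Type} [Fintype n] [DecidableEq n] (A : Matrix n n ℝ) : ℕ :=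
  Multiset.card (A.charpoly.roots.filter fun x => x < 0)

noncomputable def nullIndex {n : Type} [Fintype n] [DecidableEq n] (A : Matrix n n ℝ) : ℕ :=
  Multiset.card (A.charpoly.roots.filter fun x => x = 0)

inductive IsTriangulatedLaman : {N : ℕ} → SimpleGraph (Fin N) → Prop
  | base : IsTriangulatedLaman (⊤ : SimpleGraph (Fin 2))
  | grow {N : ℕ} (G' : SimpleGraph (Fin (N + 2))) (G : SimpleGraph (Fin (N + 3)))
      (j k : Fin (N + 2)) :
      IsTriangulatedLaman G' → G'.Adj j k →
      (∀ a b : Fin (N + 2), G.Adj a.castSucc b.castSucc ↔ G'.Adj a b) →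
      (∀ a : Fin (N + 2), G.Adj a.castSucc (Fin.last (N + 2)) ↔ a = j ∨ a = k) →
      IsTriangulatedLaman G

def StronglyRigid {N : ℕ} (G : SimpleGraph (Fin N)) (p : Config (Fin N)) : Prop :=
  ∀ i j k : Fin N, G.Adj i j → G.Adj i k → G.Adj j k →
    ¬ Collinear ℝ ({p i, p j, p k} : Set Plane)

def TriangleInequalities {N : ℕ} (G : SimpleGraph (Fin N)) (d : Fin N → Fin N → ℝ) : Prop :=
  ∀ i j k : Fin N, G.Adj i j → G.Adj i k → G.Adj j k → d j k < d i j + d i k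

def vertexSet {N : ℕ} (B : Finset (Sym2 (Fin N))) : Finset (Fin N) :=
  Finset.univ.filter fun v => ∃ e ∈ B, v ∈ e

def inducedSubgraph {N : ℕ} (B : Finset (Sym2 (Fin N))) : SimpleGraph ↥(vertexSet B) :=
  SimpleGraph.fromEdgeSet {e | Sym2.map Subtype.val e ∈ B}

def InducedTLaman {N : ℕ} (B : Finset (Sym2 (Fin N))) : Prop :=
  ∃ (M : ℕ) (H : SimpleGraph (Fin M)), IsTriangulatedLaman H ∧ Nonempty (inducedSubgraph B ≃g H)

def IsLineLamanPart {N : ℕ} (p : Config (Fin N)) (B : Finset (Sym2 (Fin N))) : Prop :=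
  InducedTLaman B ∧ Collinear ℝ (p '' (vertexSet B : Set (Fin N)))

def IsLineLamanPartition {N : ℕ} (G : SimpleGraph (Fin N)) (p : Config (Fin N))
    (P : Finset (Finset (Sym2 (Fin N)))) : Prop :=
  (∀ B ∈ P, B.Nonempty ∧ (B : Set (Sym2 (Fin N))) ⊆ G.edgeSet ∧ IsLineLamanPart p B) ∧
  ∀ e ∈ G.edgeSet, ∃! B, B ∈ P ∧ e ∈ B

def Refines {N : ℕ} (Q P : Finset (Finset (Sym2 (Fin N)))) : Prop :=
  ∀ B ∈ Q, ∃ C ∈ P, B ⊆ C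

def IsIndependentPartition {N : ℕ} (G : SimpleGraph (Fin N)) (p : Config (Fin N))
    (P : Finset (Finset (Sym2 (Fin N)))) : Prop :=
  IsLineLamanPartition G p P ∧ ∀ Q, IsLineLamanPartition G p Q → Refines Q P

def subConfig {N : ℕ} (p : Config (Fin N)) (B : Finset (Sym2 (Fin N))) :
    Config ↥(vertexSet B) :=
  WithLp.toLp 2 fun v => p v.1

noncomputable def subField {N : ℕ} (f : Fin N → Fin N → ℝ → ℝ) (B : Finset (Sym2 (Fin N))) :
    Config ↥(vertexSet B) → Config ↥(vertexSet B) :=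
  formationField (fun u v => s(u.1, v.1) ∈ B) (fun u v => f u.1 v.1)

def IsEquivariantMorse {N : ℕ} (G : SimpleGraph (Fin N)) (f : Fin N → Fin N → ℝ → ℝ) : Prop :=
  (∃ S : Finset (Config (Fin N)),
      {p | p ∈ ConfigSpace G ∧ formationField G.Adj f p = 0} = ⋃ q ∈ S, orbitSE2 q) ∧
  ∀ p, p ∈ ConfigSpace G → formationField G.Adj f p = 0 →
    nullIndex (jacMat (formationField G.Adj f) p) = 3

noncomputable def distMap {N : ℕ} (G : SimpleGraph (Fin N)) (p : Config (Fin N)) :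
    ↥G.edgeFinset → ℝ :=
  fun e => Sym2.lift ⟨fun i j => ‖p i - p j‖ ^ 2, fun i j => by dsimp only; rw [norm_sub_rev]⟩ e.1

/-!
Realizations are built one vertex at a time along the Laman construction. A new vertex joined to
the endpoints of an edge `jk` must lie on two circles around `x_j` and `x_k`; by the strict
triangle inequalities these meet in exactly two points, one on each side of the line `x_j x_k`.
The side is the sign of the cross product of `x_k - x_j` and `x - x_j`, which rotations of
determinant one preserve, so each SE(2)-orbit of realizations of the smaller graph lifts to
exactly two orbits; the base case, a single segment, is one orbit.

Strong rigidity comes from Heron's formula: four times the squared cross product of two sides of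
a triangle with side lengths `a, b, c` is `(a+b+c)(-a+b+c)(a-b+c)(a+b-c)`, which is positive
under the strict triangle inequalities, whereas collinear points have cross product zero.
-/

open scoped InnerProductSpace

lemma heron_pos {a b c : ℝ} (h₁ : c < a + b) (h₂ : a < b + c) (h₃ : b < a + c) :
    0 < (2 * a * b) ^ 2 - (a ^ 2 + b ^ 2 - c ^ 2) ^ 2 := by
  have := mul_pos (mul_pos (mul_pos (sub_pos.mpr h₁) (sub_pos.mpr h₂)) (sub_pos.mpr h₃))
    (by linarith : 0 < a + b + c)
  linarith

namespace Plane

def cross (u w : Plane) : ℝ := u 0 * w 1 - u 1 * w 0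

lemma ext_fin_two {x y : Plane} (h₀ : x 0 = y 0) (h₁ : x 1 = y 1) : x = y := by
  ext i; fin_cases i <;> assumption

lemma norm_sq_eq (w : Plane) : ‖w‖ ^ 2 = w 0 ^ 2 + w 1 ^ 2 := by
  simp [EuclideanSpace.real_norm_sq_eq, Fin.sum_univ_two]

lemma inner_eq (u w : Plane) : ⟪u, w⟫_ℝ = u 0 * w 0 + u 1 * w 1 := by
  simp [EuclideanSpace.inner_eq_star_dotProduct, dotProduct, Fin.sum_univ_two, mul_comm]

lemma inner_sq_add_cross_sq (u w : Plane) :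
    ⟪u, w⟫_ℝ ^ 2 + cross u w ^ 2 = ‖u‖ ^ 2 * ‖w‖ ^ 2 := by
  rw [inner_eq, cross, norm_sq_eq, norm_sq_eq]; ring

lemma cross_smul_smul (s t : ℝ) (v : Plane) : cross (s • v) (t • v) = 0 := by
  simp only [cross, PiLp.smul_apply, smul_eq_mul]; ring

lemma cross_eq_zero_of_collinear {x y z : Plane} (h : Collinear ℝ ({x, y, z} : Set Plane)) :
    cross (y - x) (z - x) = 0 := by
  obtain ⟨v, hv⟩ := (collinear_iff_of_mem (Set.mem_insert x _)).mp h
  obtain ⟨s, rfl⟩ := hv y (by simp)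
  obtain ⟨t, rfl⟩ := hv z (by simp)
  simpa using cross_smul_smul s t v

lemma eq_of_inner_eq_of_cross_eq {u w w' : Plane} (hu : u ≠ 0) (hi : ⟪u, w⟫_ℝ = ⟪u, w'⟫_ℝ)
    (hc : cross u w = cross u w') : w = w' := by
  have hr : u 0 ^ 2 + u 1 ^ 2 ≠ 0 := by
    rwa [← norm_sq_eq, pow_ne_zero_iff two_ne_zero, norm_ne_zero_iff]
  rw [inner_eq, inner_eq] at hi
  rw [cross, cross] at hc
  apply ext_fin_two
  · exact mul_left_cancel₀ hr (by linear_combination u 0 * hi - u 1 * hc)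
  · exact mul_left_cancel₀ hr (by linear_combination u 1 * hi + u 0 * hc)

lemma exists_inner_eq_cross_eq {u : Plane} (hu : u ≠ 0) (c h : ℝ) :
    ∃ w : Plane, ⟪u, w⟫_ℝ = c ∧ cross u w = h := by
  have hr : u 0 ^ 2 + u 1 ^ 2 ≠ 0 := by
    rwa [← norm_sq_eq, pow_ne_zero_iff two_ne_zero, norm_ne_zero_iff]
  refine ⟨(u 0 ^ 2 + u 1 ^ 2)⁻¹ • !₂[c * u 0 - h * u 1, c * u 1 + h * u 0], ?_, ?_⟩
  · simp only [inner_eq, PiLp.smul_apply, smul_eq_mul, Matrix.cons_val_zero,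
      Matrix.cons_val_one, Matrix.cons_val_fin_one]
    field_simp
    ring
  · simp only [cross, PiLp.smul_apply, smul_eq_mul, Matrix.cons_val_zero,
      Matrix.cons_val_one, Matrix.cons_val_fin_one]
    field_simp
    ring

lemma cross_ne_zero_of_lt_add {u w : Plane} (h₁ : ‖u - w‖ < ‖u‖ + ‖w‖)
    (h₂ : ‖u‖ < ‖w‖ + ‖u - w‖) (h₃ : ‖w‖ < ‖u‖ + ‖u - w‖) : cross u w ≠ 0 := by
  have hpos := heron_pos h₁ h₂ h₃
  have hheron :
      (2 * ‖u‖ * ‖w‖) ^ 2 - (‖u‖ ^ 2 + ‖w‖ ^ 2 - ‖u - w‖ ^ 2) ^ 2 = 4 * cross u w ^ 2 := by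
    rw [norm_sub_sq_real]
    linear_combination -4 * inner_sq_add_cross_sq u w
  intro h
  rw [hheron, h] at hpos
  norm_num at hpos

lemma exists_dist_eq_dist_eq_cross_pos_iff {a b : Plane} {d₁ d₂ : ℝ} (h₁ : ‖b - a‖ < d₁ + d₂)
    (h₂ : d₁ < ‖b - a‖ + d₂) (h₃ : d₂ < ‖b - a‖ + d₁) (ε : Bool) :
    ∃ x, ‖x - a‖ = d₁ ∧ ‖x - b‖ = d₂ ∧ (0 < cross (b - a) (x - a) ↔ ε) := by
  set r := ‖b - a‖
  have hr : 0 < r := by linarith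
  set c := (r ^ 2 + d₁ ^ 2 - d₂ ^ 2) / 2
  have hdisc : 0 < r ^ 2 * d₁ ^ 2 - c ^ 2 := by
    have := heron_pos h₃ h₁ h₂
    simp only [c]
    linarith
  set h := Real.sqrt (r ^ 2 * d₁ ^ 2 - c ^ 2)
  have hh : 0 < h := Real.sqrt_pos.mpr hdisc
  obtain ⟨w, hwi, hwc⟩ := exists_inner_eq_cross_eq (norm_pos_iff.mp hr) c (if ε then h else -h)
  have hw : ‖w‖ = d₁ := by
    have hsq : r ^ 2 * ‖w‖ ^ 2 = r ^ 2 * d₁ ^ 2 := by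
      rw [← inner_sq_add_cross_sq, hwi, hwc, apply_ite (· ^ 2), neg_sq, ite_self,
        Real.sq_sqrt hdisc.le]
      ring
    rw [← sq_eq_sq₀ (norm_nonneg w) (by linarith)]
    exact mul_left_cancel₀ (by positivity) hsq
  refine ⟨w + a, ?_, ?_, ?_⟩
  · rwa [add_sub_cancel_right]
  · rw [← sq_eq_sq₀ (norm_nonneg _) (by linarith), show w + a - b = w - (b - a) by abel,
      norm_sub_sq_real, real_inner_comm, hwi, hw]
    ring
  · rw [add_sub_cancel_right, hwc]
    cases ε <;> simp [hh, hh.le]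

lemma eq_of_dist_eq_of_cross_pos_iff {a b x y : Plane} (hab : a ≠ b) (hxa : ‖x - a‖ = ‖y - a‖)
    (hxb : ‖x - b‖ = ‖y - b‖)
    (hxy : 0 < cross (b - a) (x - a) ↔ 0 < cross (b - a) (y - a)) : x = y := by
  have hi : ⟪b - a, x - a⟫_ℝ = ⟪b - a, y - a⟫_ℝ := by
    have hx := norm_sub_sq_real (x - a) (b - a)
    have hy := norm_sub_sq_real (y - a) (b - a)
    rw [sub_sub_sub_cancel_right, real_inner_comm] at hx hy
    rw [hxb, hxa] at hx
    linarith
  have hc : cross (b - a) (x - a) = cross (b - a) (y - a) := by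
    have hsq : cross (b - a) (x - a) ^ 2 = cross (b - a) (y - a) ^ 2 := by
      have hx := inner_sq_add_cross_sq (b - a) (x - a)
      rw [hi, hxa, ← inner_sq_add_cross_sq] at hx
      linarith
    rcases sq_eq_sq_iff_eq_or_eq_neg.mp hsq with h | h
    · exact h
    · rw [h] at hxy ⊢
      have : cross (b - a) (y - a) = 0 := by
        by_contra hne
        rcases lt_or_gt_of_ne hne with hlt | hlt <;> simp [hlt, hlt.not_gt] at hxy
      simp [this]
  simpa using eq_of_inner_eq_of_cross_eq (sub_ne_zero.mpr hab.symm) hi hc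

end Plane

open Matrix

lemma toEuclideanLin_fin_two_apply (θ : Matrix (Fin 2) (Fin 2) ℝ) (x : Plane) (i : Fin 2) :
    toEuclideanLin θ x i = θ i 0 * x 0 + θ i 1 * x 1 := by
  simp only [toLpLin_apply, mulVec, dotProduct, Fin.sum_univ_two]

lemma Plane.cross_toEuclideanLin (θ : Matrix (Fin 2) (Fin 2) ℝ) (u w : Plane) :
    Plane.cross (toEuclideanLin θ u) (toEuclideanLin θ w) = θ.det * Plane.cross u w := by
  simp only [Plane.cross, toEuclideanLin_fin_two_apply, det_fin_two]
  ring

namespace SO2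

lemma iff_entries {θ : Matrix (Fin 2) (Fin 2) ℝ} :
    SO2 θ ↔ θ 0 0 = θ 1 1 ∧ θ 0 1 = -θ 1 0 ∧ θ 0 0 ^ 2 + θ 0 1 ^ 2 = 1 :=
  mem_specialOrthogonalGroup_fin_two_iff

lemma one : SO2 1 := one_mem (specialOrthogonalGroup (Fin 2) ℝ)

lemma mul {θ₁ θ₂ : Matrix (Fin 2) (Fin 2) ℝ} (h₁ : SO2 θ₁) (h₂ : SO2 θ₂) : SO2 (θ₁ * θ₂) :=
  (specialOrthogonalGroup (Fin 2) ℝ).mul_mem h₁ h₂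

lemma transpose {θ : Matrix (Fin 2) (Fin 2) ℝ} (h : SO2 θ) : SO2 θᵀ := by
  obtain ⟨h₁, h₂, h₃⟩ := iff_entries.mp h
  refine iff_entries.mpr ⟨h₁, ?_, ?_⟩ <;> simp only [transpose_apply]
  · linarith
  · linear_combination h₃ + (θ 1 0 - θ 0 1) * h₂

lemma transpose_mul_self {θ : Matrix (Fin 2) (Fin 2) ℝ} (h : SO2 θ) : θᵀ * θ = 1 :=
  (mem_orthogonalGroup_iff' (n := Fin 2) (R := ℝ)).mp h.1

lemma norm_toEuclideanLin {θ : Matrix (Fin 2) (Fin 2) ℝ} (h : SO2 θ) (w : Plane) :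
    ‖toEuclideanLin θ w‖ = ‖w‖ := by
  obtain ⟨h₁, h₂, h₃⟩ := iff_entries.mp h
  rw [h₂] at h₃
  rw [← sq_eq_sq₀ (norm_nonneg _) (norm_nonneg _), Plane.norm_sq_eq, Plane.norm_sq_eq,
    toEuclideanLin_fin_two_apply, toEuclideanLin_fin_two_apply, ← h₁, h₂]
  linear_combination (w 0 ^ 2 + w 1 ^ 2) * h₃

lemma exists_toEuclideanLin_eq {u u' : Plane} (h : ‖u‖ = ‖u'‖) :
    ∃ θ, SO2 θ ∧ toEuclideanLin θ u = u' := by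
  rcases eq_or_ne u 0 with rfl | hu
  · exact ⟨1, one, by rw [map_zero, eq_comm, ← norm_eq_zero, ← h, norm_zero]⟩
  have hr : ‖u‖ ^ 2 ≠ 0 := by positivity
  set c := ⟪u, u'⟫_ℝ / ‖u‖ ^ 2
  set s := Plane.cross u u' / ‖u‖ ^ 2
  have hinner : ⟪u, toEuclideanLin !![c, -s; s, c] u⟫_ℝ = c * ‖u‖ ^ 2 := by
    rw [Plane.inner_eq, Plane.norm_sq_eq, toEuclideanLin_fin_two_apply,
      toEuclideanLin_fin_two_apply]
    simp only [of_apply, cons_val', cons_val_zero, cons_val_one, empty_val', cons_val_fin_one]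
    ring
  have hcross : Plane.cross u (toEuclideanLin !![c, -s; s, c] u) = s * ‖u‖ ^ 2 := by
    rw [Plane.cross, Plane.norm_sq_eq, toEuclideanLin_fin_two_apply,
      toEuclideanLin_fin_two_apply]
    simp only [of_apply, cons_val', cons_val_zero, cons_val_one, empty_val', cons_val_fin_one]
    ring
  refine ⟨!![c, -s; s, c], ?_, Plane.eq_of_inner_eq_of_cross_eq hu ?_ ?_⟩
  · refine iff_entries.mpr ⟨rfl, rfl, ?_⟩
    have := Plane.inner_sq_add_cross_sq u u'
    rw [← h] at this
    simp only [c, s, of_apply, cons_val', cons_val_zero, cons_val_one, empty_val',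
      cons_val_fin_one]
    field_simp
    linear_combination this
  · rw [hinner]; exact div_mul_cancel₀ _ hr
  · rw [hcross]; exact div_mul_cancel₀ _ hr

end SO2

section Orbit

variable {ι : Type}

lemma rotAct_apply (θ : Matrix (Fin 2) (Fin 2) ℝ) (v : Plane) (p : Config ι) (i : ι) :
    rotAct θ v p i = toEuclideanLin θ (p i) + v := rfl

lemma rotAct_one_zero (p : Config ι) : rotAct 1 0 p = p :=
  PiLp.ext fun i => by simp [rotAct_apply]

lemma rotAct_rotAct (θ₁ θ₂ : Matrix (Fin 2) (Fin 2) ℝ) (v₁ v₂ : Plane) (p : Config ι) :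
    rotAct θ₁ v₁ (rotAct θ₂ v₂ p) = rotAct (θ₁ * θ₂) (toEuclideanLin θ₁ v₂ + v₁) p :=
  PiLp.ext fun i => by
    simp only [rotAct_apply, map_add, toLpLin_mul_same, LinearMap.comp_apply]
    abel

lemma rotAct_sub_rotAct (θ : Matrix (Fin 2) (Fin 2) ℝ) (v : Plane) (p : Config ι) (i j : ι) :
    rotAct θ v p i - rotAct θ v p j = toEuclideanLin θ (p i - p j) := by
  simp only [rotAct_apply, map_sub]; abel

lemma mem_orbitSE2_self (p : Config ι) : p ∈ orbitSE2 p :=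
  ⟨1, SO2.one, 0, (rotAct_one_zero p).symm⟩

lemma mem_orbitSE2_symm {p q : Config ι} (h : q ∈ orbitSE2 p) : p ∈ orbitSE2 q := by
  obtain ⟨θ, hθ, v, rfl⟩ := h
  refine ⟨θᵀ, hθ.transpose, -toEuclideanLin θᵀ v, ?_⟩
  rw [rotAct_rotAct, hθ.transpose_mul_self, add_neg_cancel, rotAct_one_zero]

lemma mem_orbitSE2_trans {p q r : Config ι} (hq : q ∈ orbitSE2 p) (hr : r ∈ orbitSE2 q) :
    r ∈ orbitSE2 p := by
  obtain ⟨θ₁, hθ₁, v₁, rfl⟩ := hq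
  obtain ⟨θ₂, hθ₂, v₂, rfl⟩ := hr
  exact ⟨θ₂ * θ₁, hθ₂.mul hθ₁, _, rotAct_rotAct θ₂ θ₁ v₂ v₁ p⟩

lemma disjoint_orbitSE2_iff {p q : Config ι} :
    Disjoint (orbitSE2 p) (orbitSE2 q) ↔ p ∉ orbitSE2 q := by
  refine ⟨fun h hp => Set.disjoint_left.mp h (mem_orbitSE2_self p) hp, fun h => ?_⟩
  exact Set.disjoint_left.mpr fun x hxp hxq => h (mem_orbitSE2_trans hxq (mem_orbitSE2_symm hxp))

lemma mem_orbitSE2_of_norm_sub_eq {p q : Config (Fin 2)} (h : ‖q 1 - q 0‖ = ‖p 1 - p 0‖) :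
    q ∈ orbitSE2 p := by
  obtain ⟨θ, hθ, hθp⟩ := SO2.exists_toEuclideanLin_eq h.symm
  refine ⟨θ, hθ, q 0 - toEuclideanLin θ (p 0), PiLp.ext (Fin.forall_fin_two.mpr ⟨?_, ?_⟩)⟩
  · rw [rotAct_apply]; abel
  · rw [rotAct_apply, ← sub_eq_iff_eq_add', sub_eq_sub_iff_sub_eq_sub, ← map_sub, hθp]

def Config.PosOriented (a b c : ι) (p : Config ι) : Prop :=
  0 < Plane.cross (p b - p a) (p c - p a)

lemma Config.posOriented_rotAct {θ : Matrix (Fin 2) (Fin 2) ℝ} (hθ : SO2 θ) (v : Plane)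
    (a b c : ι) (p : Config ι) :
    (rotAct θ v p).PosOriented a b c ↔ p.PosOriented a b c := by
  simp only [Config.PosOriented, rotAct_sub_rotAct, Plane.cross_toEuclideanLin, hθ.2, one_mul]

end Orbit

section Realizations

variable {ι : Type}

def realizations (G : SimpleGraph ι) (d : ι → ι → ℝ) : Set (Config ι) :=
  {p | ∀ i j, G.Adj i j → ‖p i - p j‖ = d i j}

lemma orbitSE2_subset_realizations {G : SimpleGraph ι} {d : ι → ι → ℝ} {p : Config ι}
    (hp : p ∈ realizations G d) : orbitSE2 p ⊆ realizations G d := by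
  rintro q ⟨θ, hθ, v, rfl⟩ i j hij
  rw [rotAct_sub_rotAct, SO2.norm_toEuclideanLin hθ, hp i j hij]

lemma realizations_subset_configSpace {N : ℕ} {G : SimpleGraph (Fin N)} {d : Fin N → Fin N → ℝ}
    (hdpos : ∀ i j, G.Adj i j → 0 < d i j) : realizations G d ⊆ ConfigSpace G := by
  intro p hp i j hij hpij
  have := hp i j hij
  rw [hpij, sub_self, norm_zero] at this
  exact (hdpos i j hij).ne this

def IsOrbitTransversal (S : Finset (Config ι)) (X : Set (Config ι)) : Prop :=
  (S : Set (Config ι)).Pairwise (fun a b => Disjoint (orbitSE2 a) (orbitSE2 b)) ∧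
    X = ⋃ q ∈ S, orbitSE2 q

namespace IsOrbitTransversal

variable {S : Finset (Config ι)} {X : Set (Config ι)}

lemma mem (hS : IsOrbitTransversal S X) {q : Config ι} (hq : q ∈ S) : q ∈ X :=
  hS.2 ▸ Set.mem_biUnion hq (mem_orbitSE2_self q)

lemma exists_mem_orbitSE2 (hS : IsOrbitTransversal S X) {x : Config ι} (hx : x ∈ X) :
    ∃ q ∈ S, x ∈ orbitSE2 q := by
  rw [hS.2] at hx
  simpa using hx

lemma eq_of_mem_orbitSE2 (hS : IsOrbitTransversal S X) {a b : Config ι} (ha : a ∈ S)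
    (hb : b ∈ S) (hab : a ∈ orbitSE2 b) : a = b := by
  by_contra hne
  exact disjoint_orbitSE2_iff.mp (hS.1 ha hb hne) hab

end IsOrbitTransversal

lemma isOrbitTransversal_image {α : Type} {s : Finset α} {f : α → Config ι} {X : Set (Config ι)}
    (hX : ∀ x ∈ X, orbitSE2 x ⊆ X) (hmem : ∀ z ∈ s, f z ∈ X)
    (hcover : ∀ x ∈ X, ∃ z ∈ s, x ∈ orbitSE2 (f z))
    (hsep : ∀ z₁ ∈ s, ∀ z₂ ∈ s, f z₁ ∈ orbitSE2 (f z₂) → z₁ = z₂) :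
    (s.image f).card = s.card ∧ IsOrbitTransversal (s.image f) X := by
  refine ⟨Finset.card_image_of_injOn fun z₁ h₁ z₂ h₂ h => ?_, ?_, ?_⟩
  · exact hsep z₁ h₁ z₂ h₂ (h ▸ mem_orbitSE2_self _)
  · simp only [Finset.coe_image]
    rintro _ ⟨z₁, h₁, rfl⟩ _ ⟨z₂, h₂, rfl⟩ hne
    exact disjoint_orbitSE2_iff.mpr fun h => hne (congrArg f (hsep z₁ h₁ z₂ h₂ h))
  · ext x
    simp only [Finset.mem_image, Set.mem_iUnion, exists_prop]
    refine ⟨fun hx => ?_, ?_⟩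
    · obtain ⟨z, hz, hxz⟩ := hcover x hx
      exact ⟨f z, ⟨z, hz, rfl⟩, hxz⟩
    · rintro ⟨_, ⟨z, hz, rfl⟩, hxz⟩
      exact hX _ (hmem z hz) hxz

end Realizations

lemma TriangleInequalities.lt_add {N : ℕ} {G : SimpleGraph (Fin N)} {d : Fin N → Fin N → ℝ}
    (htri : TriangleInequalities G d) (hdsym : ∀ i j, d i j = d j i) {i j k : Fin N}
    (hij : G.Adj i j) (hik : G.Adj i k) (hjk : G.Adj j k) :
    d j k < d i j + d i k ∧ d i j < d i k + d j k ∧ d i k < d i j + d j k := by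
  have h₂ := htri k i j hik.symm hjk.symm hij
  have h₃ := htri j i k hij.symm hjk hik
  rw [hdsym k i, hdsym k j] at h₂
  rw [hdsym j i] at h₃
  exact ⟨htri i j k hij hik hjk, by linarith, by linarith⟩

lemma stronglyRigid_of_mem_realizations {N : ℕ} {G : SimpleGraph (Fin N)}
    {d : Fin N → Fin N → ℝ} (hdsym : ∀ i j, d i j = d j i) (htri : TriangleInequalities G d)
    {p : Config (Fin N)} (hp : p ∈ realizations G d) : StronglyRigid G p := by
  intro i j k hij hik hjk hcol
  obtain ⟨h₁, h₂, h₃⟩ := htri.lt_add hdsym hij hik hjk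
  have hu : ‖p j - p i‖ = d i j := by rw [norm_sub_rev]; exact hp i j hij
  have hw : ‖p k - p i‖ = d i k := by rw [norm_sub_rev]; exact hp i k hik
  have huw : ‖(p j - p i) - (p k - p i)‖ = d j k := by
    rw [sub_sub_sub_cancel_right]; exact hp j k hjk
  exact Plane.cross_ne_zero_of_lt_add (by rwa [hu, hw, huw]) (by rwa [hu, hw, huw])
    (by rwa [hu, hw, huw]) (Plane.cross_eq_zero_of_collinear hcol)

section Grow

variable {n : ℕ}

def Config.init (p : Config (Fin (n + 1))) : Config (Fin n) :=
  WithLp.toLp 2 fun a => p a.castSucc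

def Config.snoc (q : Config (Fin n)) (x : Plane) : Config (Fin (n + 1)) :=
  WithLp.toLp 2 (Fin.snoc (α := fun _ => Plane) q.ofLp x)

@[simp] lemma Config.init_apply (p : Config (Fin (n + 1))) (a : Fin n) :
    p.init a = p a.castSucc := rfl

@[simp] lemma Config.snoc_castSucc (q : Config (Fin n)) (x : Plane) (a : Fin n) :
    q.snoc x a.castSucc = q a := Fin.snoc_castSucc (α := fun _ => Plane) ..

@[simp] lemma Config.snoc_last (q : Config (Fin n)) (x : Plane) :
    q.snoc x (Fin.last n) = x := Fin.snoc_last (α := fun _ => Plane) ..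

@[simp] lemma Config.init_snoc (q : Config (Fin n)) (x : Plane) : (q.snoc x).init = q :=
  PiLp.ext fun a => by simp

lemma Config.init_rotAct (θ : Matrix (Fin 2) (Fin 2) ℝ) (v : Plane) (p : Config (Fin (n + 1))) :
    (rotAct θ v p).init = rotAct θ v p.init := rfl

lemma Config.ext_init_last {p p' : Config (Fin (n + 1))} (hinit : p.init = p'.init)
    (hlast : p (Fin.last n) = p' (Fin.last n)) : p = p' := by
  refine PiLp.ext fun i => Fin.lastCases hlast (fun a => ?_) i
  simpa using congrArg (· a) hinit

structure IsTriangleExtension (G' : SimpleGraph (Fin n)) (G : SimpleGraph (Fin (n + 1)))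
    (j k : Fin n) : Prop where
  adj : G'.Adj j k
  adj_castSucc_iff : ∀ a b, G.Adj a.castSucc b.castSucc ↔ G'.Adj a b
  adj_last_iff : ∀ a, G.Adj a.castSucc (Fin.last n) ↔ a = j ∨ a = k

variable {G' : SimpleGraph (Fin n)} {G : SimpleGraph (Fin (n + 1))} {j k : Fin n}
  {d : Fin (n + 1) → Fin (n + 1) → ℝ}

lemma mem_realizations_iff_init (hG' : ∀ a b, G.Adj a.castSucc b.castSucc ↔ G'.Adj a b)
    (hlast : ∀ a, G.Adj a.castSucc (Fin.last n) ↔ a = j ∨ a = k)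
    (hdsym : ∀ i j, d i j = d j i) {p : Config (Fin (n + 1))} :
    p ∈ realizations G d ↔
      p.init ∈ realizations G' (fun a b => d a.castSucc b.castSucc) ∧
        ‖p (Fin.last n) - p j.castSucc‖ = d j.castSucc (Fin.last n) ∧
        ‖p (Fin.last n) - p k.castSucc‖ = d k.castSucc (Fin.last n) := by
  have hlast' : ∀ a : Fin n, ‖p (Fin.last n) - p a.castSucc‖ = d a.castSucc (Fin.last n) ↔
      ‖p a.castSucc - p (Fin.last n)‖ = d a.castSucc (Fin.last n) := fun a => by
    rw [norm_sub_rev]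
  refine ⟨fun hp => ⟨fun a b hab => hp _ _ ((hG' a b).mpr hab), ?_, ?_⟩, ?_⟩
  · exact (hlast' j).mpr (hp _ _ ((hlast j).mpr (Or.inl rfl)))
  · exact (hlast' k).mpr (hp _ _ ((hlast k).mpr (Or.inr rfl)))
  · rintro ⟨hinit, hj, hk⟩
    have hnew : ∀ a : Fin n, G.Adj a.castSucc (Fin.last n) →
        ‖p a.castSucc - p (Fin.last n)‖ = d a.castSucc (Fin.last n) := by
      intro a ha
      rcases (hlast a).mp ha with rfl | rfl
      · exact (hlast' a).mp hj
      · exact (hlast' a).mp hk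
    intro i i' hii'
    induction i using Fin.lastCases <;> induction i' using Fin.lastCases
    · exact absurd hii' (G.loopless.irrefl _)
    · rw [norm_sub_rev, hdsym]; exact hnew _ hii'.symm
    · exact hnew _ hii'
    · exact hinit _ _ ((hG' _ _).mp hii')

lemma exists_snoc_mem_realizations (hG : IsTriangleExtension G' G j k)
    (hdsym : ∀ i j, d i j = d j i) (htri : TriangleInequalities G d) {q : Config (Fin n)}
    (hq : q ∈ realizations G' (fun a b => d a.castSucc b.castSucc)) (ε : Bool) :
    ∃ x, q.snoc x ∈ realizations G d ∧
      ((q.snoc x).PosOriented j.castSucc k.castSucc (Fin.last n) ↔ ε) := by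
  obtain ⟨h₁, h₂, h₃⟩ := htri.lt_add hdsym ((hG.adj_castSucc_iff j k).mpr hG.adj)
    ((hG.adj_last_iff j).mpr (Or.inl rfl)) ((hG.adj_last_iff k).mpr (Or.inr rfl))
  have hr : ‖q k - q j‖ = d j.castSucc k.castSucc := (hq k j hG.adj.symm).trans (hdsym _ _)
  obtain ⟨x, hxj, hxk, hxε⟩ :=
    Plane.exists_dist_eq_dist_eq_cross_pos_iff (hr ▸ h₂) (hr ▸ h₃) (hr ▸ h₁) ε
  refine ⟨x, (mem_realizations_iff_init hG.adj_castSucc_iff hG.adj_last_iff hdsym).mpr ?_,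
    by simpa [Config.PosOriented]⟩
  exact ⟨by simpa, by simpa, by simpa⟩

lemma eq_of_mem_realizations_of_init_eq (hG : IsTriangleExtension G' G j k)
    (hdsym : ∀ i j, d i j = d j i) (htri : TriangleInequalities G d)
    {p p' : Config (Fin (n + 1))} (hp : p ∈ realizations G d) (hp' : p' ∈ realizations G d)
    (hinit : p.init = p'.init)
    (horient : p.PosOriented j.castSucc k.castSucc (Fin.last n) ↔
      p'.PosOriented j.castSucc k.castSucc (Fin.last n)) : p = p' := by
  have hajk := (hG.adj_castSucc_iff j k).mpr hG.adj
  obtain ⟨h₁, -, h₃⟩ := htri.lt_add hdsym hajk ((hG.adj_last_iff j).mpr (Or.inl rfl))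
    ((hG.adj_last_iff k).mpr (Or.inr rfl))
  obtain ⟨-, hpj, hpk⟩ :=
    (mem_realizations_iff_init hG.adj_castSucc_iff hG.adj_last_iff hdsym).mp hp
  obtain ⟨-, hpj', hpk'⟩ :=
    (mem_realizations_iff_init hG.adj_castSucc_iff hG.adj_last_iff hdsym).mp hp'
  have hj : p j.castSucc = p' j.castSucc := congrArg (· j) hinit
  have hk : p k.castSucc = p' k.castSucc := congrArg (· k) hinit
  have hne : p j.castSucc ≠ p k.castSucc := by
    intro h
    have := hp _ _ hajk
    rw [h, sub_self, norm_zero] at this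
    linarith
  refine Config.ext_init_last hinit (Plane.eq_of_dist_eq_of_cross_pos_iff hne ?_ ?_ ?_)
  · rw [hpj, hj, hpj']
  · rw [hpk, hk, hpk']
  · simpa only [Config.PosOriented, hj, hk] using horient

lemma exists_isOrbitTransversal_snoc (hG : IsTriangleExtension G' G j k)
    (hdsym : ∀ i j, d i j = d j i) (htri : TriangleInequalities G d) {S' : Finset (Config (Fin n))}
    (hS' : IsOrbitTransversal S' (realizations G' fun a b => d a.castSucc b.castSucc)) :
    ∃ S : Finset (Config (Fin (n + 1))), S.card = 2 * S'.card ∧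
      IsOrbitTransversal S (realizations G d) := by
  choose! apex hapex horient using fun q (hq : q ∈ S') =>
    exists_snoc_mem_realizations hG hdsym htri (hS'.mem hq)
  set f : Config (Fin n) × Bool → Config (Fin (n + 1)) := fun z => z.1.snoc (apex z.1 z.2)
  have hcover : ∀ p ∈ realizations G d, ∃ z ∈ S' ×ˢ Finset.univ, p ∈ orbitSE2 (f z) := by
    intro p hp
    obtain ⟨q, hq, hpq⟩ := hS'.exists_mem_orbitSE2
      ((mem_realizations_iff_init hG.adj_castSucc_iff hG.adj_last_iff hdsym).mp hp).1
    obtain ⟨θ, hθ, v, hq_eq⟩ := mem_orbitSE2_symm hpq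
    have hp₂ := orbitSE2_subset_realizations hp ⟨θ, hθ, v, rfl⟩
    refine ⟨(q, decide ((rotAct θ v p).PosOriented j.castSucc k.castSucc (Fin.last n))),
      Finset.mem_product.mpr ⟨hq, Finset.mem_univ _⟩, ?_⟩
    simp only [f]
    rw [eq_of_mem_realizations_of_init_eq hG hdsym htri (hapex q hq _) hp₂
      (by rw [Config.init_snoc, Config.init_rotAct, hq_eq])
      (by rw [horient q hq]; simp)]
    exact mem_orbitSE2_symm ⟨θ, hθ, v, rfl⟩
  have hsep : ∀ z₁ ∈ S' ×ˢ Finset.univ, ∀ z₂ ∈ S' ×ˢ Finset.univ,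
      f z₁ ∈ orbitSE2 (f z₂) → z₁ = z₂ := by
    rintro ⟨q₁, ε₁⟩ hz₁ ⟨q₂, ε₂⟩ hz₂ ⟨θ, hθ, v, h⟩
    simp only [Finset.mem_product, Finset.mem_univ, and_true] at hz₁ hz₂
    simp only [f] at h
    obtain rfl : q₁ = q₂ := hS'.eq_of_mem_orbitSE2 hz₁ hz₂
      ⟨θ, hθ, v, by simpa [Config.init_rotAct] using congrArg Config.init h⟩
    have horient₁ := horient q₁ hz₁ ε₁
    rw [h, Config.posOriented_rotAct hθ, horient q₁ hz₂ ε₂] at horient₁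
    rw [Bool.coe_iff_coe.mp horient₁]
  obtain ⟨hcard, hS⟩ := isOrbitTransversal_image (fun _ => orbitSE2_subset_realizations)
    (fun z hz => hapex _ (Finset.mem_product.mp hz).1 _) hcover hsep
  exact ⟨_, by rw [hcard, Finset.card_product, Finset.card_univ, Fintype.card_bool, mul_comm], hS⟩

end Grow

lemma mem_realizations_top_iff {d : Fin 2 → Fin 2 → ℝ} (hdsym : ∀ i j, d i j = d j i)
    {p : Config (Fin 2)} : p ∈ realizations ⊤ d ↔ ‖p 1 - p 0‖ = d 0 1 := by
  refine ⟨fun hp => by rw [norm_sub_rev]; exact hp 0 1 (by simp), fun hp i j hij => ?_⟩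
  fin_cases i <;> fin_cases j
  · exact absurd hij (by simp)
  · simpa [norm_sub_rev] using hp
  · simpa [hdsym 1 0] using hp
  · exact absurd hij (by simp)

lemma exists_isOrbitTransversal_realizations_top {d : Fin 2 → Fin 2 → ℝ}
    (hdsym : ∀ i j, d i j = d j i) (hd : 0 ≤ d 0 1) :
    ∃ S : Finset (Config (Fin 2)), S.card = 1 ∧ IsOrbitTransversal S (realizations ⊤ d) := by
  set q : Config (Fin 2) := WithLp.toLp 2 ![0, EuclideanSpace.single 0 (d 0 1)]
  have hq : q ∈ realizations ⊤ d := (mem_realizations_top_iff hdsym).mpr <| by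
    simp [q, abs_of_nonneg hd]
  refine ⟨{q}, Finset.card_singleton q, by simp, ?_⟩
  simp only [Finset.mem_singleton, Set.iUnion_iUnion_eq_left]
  refine Set.Subset.antisymm (fun p hp => mem_orbitSE2_of_norm_sub_eq ?_)
    (orbitSE2_subset_realizations hq)
  rw [(mem_realizations_top_iff hdsym).mp hp, (mem_realizations_top_iff hdsym).mp hq]

theorem exists_isOrbitTransversal_realizations {N : ℕ} {G : SimpleGraph (Fin N)}
    (hG : IsTriangulatedLaman G) {d : Fin N → Fin N → ℝ} (hdsym : ∀ i j, d i j = d j i)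
    (hdpos : ∀ i j, G.Adj i j → 0 < d i j) (htri : TriangleInequalities G d) :
    ∃ S : Finset (Config (Fin N)), S.card = 2 ^ (N - 2) ∧
      IsOrbitTransversal S (realizations G d) := by
  induction hG with
  | base => exact exists_isOrbitTransversal_realizations_top hdsym (hdpos 0 1 (by simp)).le
  | grow G' G j k _ hjk hG' hlast ih =>
    obtain ⟨S', hcard', hS'⟩ := ih (fun a b => hdsym _ _)
      (fun a b hab => hdpos _ _ ((hG' a b).mpr hab))
      (fun a b c h₁ h₂ h₃ => htri _ _ _ ((hG' _ _).mpr h₁) ((hG' _ _).mpr h₂) ((hG' _ _).mpr h₃))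
    obtain ⟨S, hcard, hS⟩ := exists_isOrbitTransversal_snoc ⟨hjk, hG', hlast⟩ hdsym htri hS'
    exact ⟨S, by rw [hcard, hcard', ← pow_succ']; rfl, hS⟩

open Filter MeasureTheory

theorem stmt_9_general {N : ℕ} (G : SimpleGraph (Fin N)) (hG : IsTriangulatedLaman G)
    (d : Fin N → Fin N → ℝ) (hdsym : ∀ i j, d i j = d j i)
    (hdpos : ∀ i j, G.Adj i j → 0 < d i j) (htri : TriangleInequalities G d) :
    {p : Config (Fin N) | p ∈ ConfigSpace G ∧
      ∀ i j, G.Adj i j → ‖p i - p j‖ = d i j}.Nonempty ∧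
    (∀ p : Config (Fin N), p ∈ ConfigSpace G → (∀ i j, G.Adj i j → ‖p i - p j‖ = d i j) →
      StronglyRigid G p) ∧
    ∃ S : Finset (Config (Fin N)), S.card = 2 ^ (N - 2) ∧
      (↑S : Set (Config (Fin N))).Pairwise (fun a b => Disjoint (orbitSE2 a) (orbitSE2 b)) ∧
      {p : Config (Fin N) | p ∈ ConfigSpace G ∧ ∀ i j, G.Adj i j → ‖p i - p j‖ = d i j} =
        ⋃ q ∈ S, orbitSE2 q := by
  have hT : {p : Config (Fin N) | p ∈ ConfigSpace G ∧ ∀ i j, G.Adj i j → ‖p i - p j‖ = d i j} =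
      realizations G d :=
    Set.inter_eq_right.mpr (realizations_subset_configSpace hdpos)
  obtain ⟨S, hcard, hS⟩ := exists_isOrbitTransversal_realizations hG hdsym hdpos htri
  obtain ⟨q, hq⟩ : S.Nonempty := Finset.card_pos.mp (hcard ▸ by positivity)
  exact ⟨⟨q, hT ▸ hS.mem hq⟩, fun p _ hp => stronglyRigid_of_mem_realizations hdsym htri hp,
    S, hcard, hS.1, hT.trans hS.2⟩

theorem stmt_9 {N : ℕ} (hN : 2 ≤ N) (G : SimpleGraph (Fin N)) (hG : IsTriangulatedLaman G)
    (d : Fin N → Fin N → ℝ) (hdsym : ∀ i j, d i j = d j i)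
    (hdpos : ∀ i j, G.Adj i j → 0 < d i j) (htri : TriangleInequalities G d) :
    {p : Config (Fin N) | p ∈ ConfigSpace G ∧
      ∀ i j, G.Adj i j → ‖p i - p j‖ = d i j}.Nonempty ∧
    (∀ p : Config (Fin N), p ∈ ConfigSpace G → (∀ i j, G.Adj i j → ‖p i - p j‖ = d i j) →
      StronglyRigid G p) ∧
    ∃ S : Finset (Config (Fin N)), S.card = 2 ^ (N - 2) ∧
      (↑S : Set (Config (Fin N))).Pairwise (fun a b => Disjoint (orbitSE2 a) (orbitSE2 b)) ∧
      {p : Config (Fin N) | p ∈ ConfigSpace G ∧ ∀ i j, G.Adj i j → ‖p i - p j‖ = d i j} =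
        ⋃ q ∈ S, orbitSE2 q :=
  stmt_9_general G hG d hdsym hdpos htri

end
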